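/- Let L > 0, let k be a natural number, let f : ℝ → ℝ be infinitely differentiable and L-periodic, and let u, v : ℝ → ℂ be infinitely differentiable and L-periodic. Then the anti-commutator operator ⟨f⟩ₖ satisfies ∫₀ᴸ conj((⟨f⟩ₖ u)(x)) · v(x) dx = (−1)ᵏ ∫₀ᴸ conj(u(x)) · (⟨f⟩ₖ v)(x) dx; in particular, with respect to the L² inner product on L-periodic functions, ⟨f⟩ₖ is Hermitian for even k and skew-Hermitian for odd k. -/

import Mathlib

lemma periodic_deriv' (g : ℝ → ℂ) (L : ℝ) (h : Function.Periodic g L) :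
    Function.Periodic (deriv g) L := by
  intro x
  have : (fun y => g (y + L)) = g := funext h
  rw [← deriv_comp_add_const, this]

lemma periodic_iteratedDeriv (k : ℕ) (g : ℝ → ℂ) (L : ℝ) (h : Function.Periodic g L) :
    Function.Periodic (iteratedDeriv k g) L := by
  induction k with
  | zero => simpa using h
  | succ n ih => rw [iteratedDeriv_succ]; exact periodic_deriv' _ _ ih

lemma contDiff_deriv (g : ℝ → ℂ) (hg : ContDiff ℝ (⊤:ℕ∞) g) : ContDiff ℝ (⊤:ℕ∞) (deriv g) := by
  have := (contDiff_infty_iff_deriv.1 hg).2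
  exact this

lemma contDiff_iteratedDeriv (k : ℕ) (g : ℝ → ℂ) (hg : ContDiff ℝ (⊤:ℕ∞) g) :
    ContDiff ℝ (⊤:ℕ∞) (iteratedDeriv k g) := by
  induction k with
  | zero => simpa using hg
  | succ n ih => rw [iteratedDeriv_succ]; exact contDiff_deriv _ ih

lemma ibp1 (L : ℝ) (g h : ℝ → ℂ) (hg : ContDiff ℝ (⊤:ℕ∞) g) (hgp : Function.Periodic g L)
    (hh : ContDiff ℝ (⊤:ℕ∞) h) (hhp : Function.Periodic h L) :
    ∫ x in (0:ℝ)..L, deriv g x * h x = - ∫ x in (0:ℝ)..L, g x * deriv h x := by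
  have hgd : Differentiable ℝ g := hg.differentiable (by simp)
  have hhd : Differentiable ℝ h := hh.differentiable (by simp)
  have hgc : Continuous (deriv g) := (contDiff_deriv g hg).continuous
  have hhc : Continuous (deriv h) := (contDiff_deriv h hh).continuous
  have key := intervalIntegral.integral_deriv_mul_eq_sub
    (u := g) (v := h) (u' := deriv g) (v' := deriv h) (a := 0) (b := L)
    (fun x _ => (hgd x).hasDerivAt) (fun x _ => (hhd x).hasDerivAt)
    (hgc.intervalIntegrable _ _) (hhc.intervalIntegrable _ _)
  have hb : g L * h L - g 0 * h 0 = 0 := by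
    have h1 : g L = g 0 := by simpa using hgp 0
    have h2 : h L = h 0 := by simpa using hhp 0
    rw [h1, h2, sub_self]
  rw [hb] at key
  have hsplit : (∫ x in (0:ℝ)..L, deriv g x * h x) + ∫ x in (0:ℝ)..L, g x * deriv h x = 0 := by
    rw [← intervalIntegral.integral_add
      ((hgc.fun_mul hh.continuous).intervalIntegrable _ _)
      ((hg.continuous.fun_mul hhc).intervalIntegrable _ _)]
    exact key
  linear_combination hsplit

lemma ibpk (L : ℝ) (k : ℕ) : ∀ (g h : ℝ → ℂ), ContDiff ℝ (⊤:ℕ∞) g → Function.Periodic g L →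
    ContDiff ℝ (⊤:ℕ∞) h → Function.Periodic h L →
    ∫ x in (0:ℝ)..L, iteratedDeriv k g x * h x
      = (-1 : ℂ) ^ k * ∫ x in (0:ℝ)..L, g x * iteratedDeriv k h x := by
  induction k with
  | zero => intro g h _ _ _ _; simp [iteratedDeriv_zero]
  | succ n ih =>
    intro g h hg hgp hh hhp
    rw [iteratedDeriv_succ']
    rw [ih (deriv g) h (contDiff_deriv g hg) (periodic_deriv' g L hgp) hh hhp]
    rw [ibp1 L g (iteratedDeriv n h) hg hgp (contDiff_iteratedDeriv n h hh)
      (periodic_iteratedDeriv n h L hhp)]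
    rw [← iteratedDeriv_succ]
    ring

lemma iteratedDeriv_conj (k : ℕ) (u : ℝ → ℂ) :
    iteratedDeriv k (fun y => starRingEnd ℂ (u y)) = fun x => starRingEnd ℂ (iteratedDeriv k u x) := by
  induction k with
  | zero => simp [iteratedDeriv_zero]
  | succ n ih =>
    funext x
    rw [iteratedDeriv_succ, ih, iteratedDeriv_succ]
    exact deriv.star

/-- The anti-commutator operator `⟨f⟩ₖ u = (1/2)(f·u⁽ᵏ⁾ + (f·u)⁽ᵏ⁾)` for real-valued `f`. -/
noncomputable def angR (k : ℕ) (f : ℝ → ℝ) (u : ℝ → ℂ) : ℝ → ℂ :=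
  fun x => (1/2 : ℂ) * ((f x : ℂ) * iteratedDeriv k u x
    + iteratedDeriv k (fun y => (f y : ℂ) * u y) x)

theorem angR_hermitian_or_skewHermitian (L : ℝ) (hL : 0 < L) (k : ℕ)
    (f : ℝ → ℝ) (hf : ContDiff ℝ (⊤ : ℕ∞) f) (hfp : Function.Periodic f L)
    (u v : ℝ → ℂ) (hu : ContDiff ℝ (⊤ : ℕ∞) u) (hup : Function.Periodic u L)
    (hv : ContDiff ℝ (⊤ : ℕ∞) v) (hvp : Function.Periodic v L) :
    ∫ x in (0:ℝ)..L, (starRingEnd ℂ) (angR k f u x) * v x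
      = (-1 : ℂ) ^ k * ∫ x in (0:ℝ)..L, (starRingEnd ℂ) (u x) * angR k f v x := by
  set w : ℝ → ℂ := fun x => starRingEnd ℂ (u x) with hwdef
  have hfC : ContDiff ℝ (⊤:ℕ∞) (fun x => (f x : ℂ)) :=
    Complex.ofRealCLM.contDiff.comp (hf.of_le (by simp))
  have huC : ContDiff ℝ (⊤:ℕ∞) u := hu.of_le (by simp)
  have hvC : ContDiff ℝ (⊤:ℕ∞) v := hv.of_le (by simp)
  have hwC : ContDiff ℝ (⊤:ℕ∞) w := Complex.conjCLE.contDiff.comp huC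
  have hwp : Function.Periodic w L := fun x => by simp [hwdef, hup x]
  have hfwC : ContDiff ℝ (⊤:ℕ∞) (fun y => (f y : ℂ) * w y) := hfC.mul hwC
  have hfvC : ContDiff ℝ (⊤:ℕ∞) (fun y => (f y : ℂ) * v y) := hfC.mul hvC
  have hfwp : Function.Periodic (fun y => (f y : ℂ) * w y) L := fun x => by
    simp [hfp x, hwp x]
  have hfvp : Function.Periodic (fun y => (f y : ℂ) * v y) L := fun x => by
    simp [hfp x, hvp x]
  -- rewrite conjugate
  have hconj : ∀ x, (starRingEnd ℂ) (angR k f u x)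
      = (1/2 : ℂ) * (iteratedDeriv k w x * (f x : ℂ)
        + iteratedDeriv k (fun y => (f y : ℂ) * w y) x) := by
    intro x
    have h1 : (fun y => starRingEnd ℂ (u y)) = w := rfl
    have h2 : (fun y => starRingEnd ℂ ((f y : ℂ) * u y)) = fun y => (f y : ℂ) * w y := by
      funext y; simp [hwdef, mul_comm]
    simp only [angR, map_mul, map_add]
    rw [show (starRingEnd ℂ) (iteratedDeriv k u x) = iteratedDeriv k w x from
        (congrFun (iteratedDeriv_conj k u) x).symm ▸ rfl]
    rw [show (starRingEnd ℂ) (iteratedDeriv k (fun y => (f y : ℂ) * u y) x)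
        = iteratedDeriv k (fun y => (f y : ℂ) * w y) x by
      rw [← congrFun (iteratedDeriv_conj k (fun y => (f y : ℂ) * u y)) x, h2]]
    simp [Complex.conj_ofReal, map_ofNat, mul_comm]
  have cKw : Continuous (iteratedDeriv k w) := (contDiff_iteratedDeriv k w hwC).continuous
  have cKv : Continuous (iteratedDeriv k v) := (contDiff_iteratedDeriv k v hvC).continuous
  have cKfw : Continuous (iteratedDeriv k (fun y => (f y : ℂ) * w y)) :=
    (contDiff_iteratedDeriv k _ hfwC).continuous
  have cKfv : Continuous (iteratedDeriv k (fun y => (f y : ℂ) * v y)) :=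
    (contDiff_iteratedDeriv k _ hfvC).continuous
  have cf : Continuous (fun x => (f x : ℂ)) := hfC.continuous
  have cv : Continuous v := hvC.continuous
  have cw : Continuous w := hwC.continuous
  have hL1 : (∫ x in (0:ℝ)..L, (starRingEnd ℂ) (angR k f u x) * v x)
      = (1/2 : ℂ) * (∫ x in (0:ℝ)..L, iteratedDeriv k w x * ((f x : ℂ) * v x))
        + (1/2 : ℂ) * (∫ x in (0:ℝ)..L, iteratedDeriv k (fun y => (f y : ℂ) * w y) x * v x) := by
    rw [← intervalIntegral.integral_const_mul, ← intervalIntegral.integral_const_mul,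
        ← intervalIntegral.integral_add
          ((continuous_const.fun_mul (cKw.fun_mul (cf.fun_mul cv))).intervalIntegrable _ _)
          ((continuous_const.fun_mul (cKfw.fun_mul cv)).intervalIntegrable _ _)]
    apply intervalIntegral.integral_congr
    intro x _
    show (starRingEnd ℂ) (angR k f u x) * v x = _
    rw [hconj x]
    ring
  have hR1 : (∫ x in (0:ℝ)..L, (starRingEnd ℂ) (u x) * angR k f v x)
      = (1/2 : ℂ) * (∫ x in (0:ℝ)..L, (fun y => (f y : ℂ) * w y) x * iteratedDeriv k v x)
        + (1/2 : ℂ) * (∫ x in (0:ℝ)..L, w x * iteratedDeriv k (fun y => (f y : ℂ) * v y) x) := by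
    rw [← intervalIntegral.integral_const_mul, ← intervalIntegral.integral_const_mul,
        ← intervalIntegral.integral_add
          ((continuous_const.fun_mul ((cf.fun_mul cw).fun_mul cKv)).intervalIntegrable _ _)
          ((continuous_const.fun_mul (cw.fun_mul cKfv)).intervalIntegrable _ _)]
    apply intervalIntegral.integral_congr
    intro x _
    show w x * angR k f v x = _
    simp only [angR]
    ring
  rw [hL1, hR1,
    ibpk L k w (fun y => (f y : ℂ) * v y) hwC hwp hfvC hfvp,
    ibpk L k (fun y => (f y : ℂ) * w y) v hfwC hfwp hvC hvp]
  ring
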